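/- Let Γ be a set and X = c₀(Γ), the real Banach space of functions on Γ vanishing at infinity with the supremum norm. Then wk_X(A) = ω(A) for every nonempty bounded subset A of X. Moreover, for every nonempty weak* compact set K ⊆ X** there exists a nonempty weakly compact set L ⊆ X such that d̂(K, ι(L)) = d̂(K, ι(X)), where ι : X → X** is the canonical embedding and d̂ is computed in X**. -/

import Mathlib

set_option maxSynthPendingDepth 3

open Metric NormedSpace Filter Topology Set

noncomputable section

/-- A subset of a Banach space is weakly compact if it is compact in the weak topology. -/
def IsWeaklyCompact {Z : Type*} [NormedAddCommGroup Z] [NormedSpace ℝ Z] (K : Set Z) : Prop :=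
  IsCompact (toWeakSpace ℝ Z '' K)

/-- `ca (x_k) = inf_n sup_{i,j ≥ n} ‖x_i - x_j‖`. -/
def ca {Z : Type*} [NormedAddCommGroup Z] (x : ℕ → Z) : ℝ :=
  ⨅ n : ℕ, sSup {r : ℝ | ∃ i j : ℕ, n ≤ i ∧ n ≤ j ∧ r = ‖x i - x j‖}

/-- `wca` is the infimum of `ca` over all subsequences. -/
def wca {Z : Type*} [NormedAddCommGroup Z] (x : ℕ → Z) : ℝ :=
  ⨅ φ : {φ : ℕ → ℕ // StrictMono φ}, ca (x ∘ φ)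

/-- A sequence is weakly Cauchy if `(x*(x_k))` converges for every functional `x*`. -/
def WeaklyCauchy {Z : Type*} [NormedAddCommGroup Z] [NormedSpace ℝ Z] (x : ℕ → Z) : Prop :=
  ∀ f : StrongDual ℝ Z, ∃ l : ℝ, Tendsto (fun n => f (x n)) atTop (nhds l)

/-- A sequence is weakly null if `x*(x_k) → 0` for every functional `x*`. -/
def WeaklyNull {Z : Type*} [NormedAddCommGroup Z] [NormedSpace ℝ Z] (x : ℕ → Z) : Prop :=
  ∀ f : StrongDual ℝ Z, Tendsto (fun n => f (x n)) atTop (nhds 0)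

/-- `cc T`: measure of non-complete-continuity of an operator. -/
def cc {X Y : Type*} [NormedAddCommGroup X] [NormedSpace ℝ X]
    [NormedAddCommGroup Y] [NormedSpace ℝ Y] (T : X →L[ℝ] Y) : ℝ :=
  sSup {r : ℝ | ∃ x : ℕ → X, (∀ n, ‖x n‖ ≤ 1) ∧ WeaklyCauchy x ∧
    r = ca (fun n => T (x n))}

/-- Non-symmetrized Hausdorff distance `d̂(A,B) = sup_{a ∈ A} dist(a, B)`. -/
def dhat {Z : Type*} [NormedAddCommGroup Z] (A B : Set Z) : ℝ :=
  ⨆ a : A, infDist (a : Z) B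

/-- de Blasi measure of weak non-compactness. -/
def deBlasiOmega {Z : Type*} [NormedAddCommGroup Z] [NormedSpace ℝ Z] (A : Set Z) : ℝ :=
  ⨅ K : {K : Set Z // K.Nonempty ∧ IsWeaklyCompact K}, dhat A K

/-- Hausdorff measure of non-compactness. -/
def hausdorffChi {Z : Type*} [NormedAddCommGroup Z] (A : Set Z) : ℝ :=
  ⨅ F : {F : Set Z // F.Finite ∧ F.Nonempty}, dhat A F

/-- weak* closure of a set of functionals. -/
def wstarClosure {E : Type*} [NormedAddCommGroup E] [NormedSpace ℝ E]
    (A : Set (StrongDual ℝ E)) : Set (StrongDual ℝ E) :=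
  StrongDual.toWeakDual ⁻¹' closure (StrongDual.toWeakDual '' A)

/-- `wk_Z(A) = d̂(cl_{w*}(ι(A)), ι(Z))` in the bidual. -/
def wkMeasure {Z : Type*} [NormedAddCommGroup Z] [NormedSpace ℝ Z] (A : Set Z) : ℝ :=
  dhat (wstarClosure ((inclusionInDoubleDual ℝ Z) '' A))
    (Set.range (inclusionInDoubleDual ℝ Z))

/-- `z` is a weak* cluster point of the sequence `u` of functionals. -/
def IsWeakStarClusterPt {E : Type*} [NormedAddCommGroup E] [NormedSpace ℝ E]
    (z : StrongDual ℝ E) (u : ℕ → StrongDual ℝ E) : Prop :=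
  MapClusterPt (StrongDual.toWeakDual z) atTop (fun n => StrongDual.toWeakDual (u n))

/-- `wck(A)`. -/
def wck {Z : Type*} [NormedAddCommGroup Z] [NormedSpace ℝ Z] (A : Set Z) : ℝ :=
  sSup {r : ℝ | ∃ x : ℕ → Z, (∀ n, x n ∈ A) ∧
    r = sInf {s : ℝ | ∃ (z : StrongDual ℝ (StrongDual ℝ Z)) (x₀ : Z),
      IsWeakStarClusterPt z (fun n => inclusionInDoubleDual ℝ Z (x n)) ∧
      s = ‖z - inclusionInDoubleDual ℝ Z x₀‖}}

/-- `ca_ρ` of a sequence. -/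
def caRho {Z : Type*} [NormedAddCommGroup Z] [NormedSpace ℝ Z] (x : ℕ → Z) : ℝ :=
  ⨆ K : {K : Set (StrongDual ℝ Z) // K ⊆ closedBall 0 1 ∧ IsWeaklyCompact K},
    ⨅ n : ℕ, sSup {r : ℝ | ∃ i j : ℕ, n ≤ i ∧ n ≤ j ∧
      ∃ f ∈ K.1, r = |f (x i) - f (x j)|}

/-- `wca_ρ` of a sequence. -/
def wcaRho {Z : Type*} [NormedAddCommGroup Z] [NormedSpace ℝ Z] (x : ℕ → Z) : ℝ :=
  ⨅ φ : {φ : ℕ → ℕ // StrictMono φ}, caRho (x ∘ φ)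

/-- `ca_{ρ*}` of a sequence in a dual space. -/
def caRhoStar {Z : Type*} [NormedAddCommGroup Z] [NormedSpace ℝ Z]
    (x : ℕ → StrongDual ℝ Z) : ℝ :=
  ⨆ K : {K : Set Z // K ⊆ closedBall 0 1 ∧ IsWeaklyCompact K},
    ⨅ n : ℕ, sSup {r : ℝ | ∃ i j : ℕ, n ≤ i ∧ n ≤ j ∧
      ∃ v ∈ K.1, r = |x i v - x j v|}

/-- `wca_{ρ*}` of a sequence in a dual space. -/
def wcaRhoStar {Z : Type*} [NormedAddCommGroup Z] [NormedSpace ℝ Z]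
    (x : ℕ → StrongDual ℝ Z) : ℝ :=
  ⨅ φ : {φ : ℕ → ℕ // StrictMono φ}, caRhoStar (x ∘ φ)

/-- `δ(x_k)`. -/
def deltaSeq {Z : Type*} [NormedAddCommGroup Z] [NormedSpace ℝ Z] (x : ℕ → Z) : ℝ :=
  ⨆ f : (closedBall (0 : StrongDual ℝ Z) 1),
    ⨅ n : ℕ, sSup {r : ℝ | ∃ i j : ℕ, n ≤ i ∧ n ≤ j ∧
      r = |(f : StrongDual ℝ Z) (x i) - (f : StrongDual ℝ Z) (x j)|}

/-- The adjoint of a bounded operator between Banach spaces. -/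
def adjointOp {X Y : Type*} [NormedAddCommGroup X] [NormedSpace ℝ X]
    [NormedAddCommGroup Y] [NormedSpace ℝ Y] (T : X →L[ℝ] Y) :
    StrongDual ℝ Y →L[ℝ] StrongDual ℝ X :=
  (ContinuousLinearMap.compL ℝ X Y ℝ).flip T

/-!
The dual of `X = c₀(Γ)` is `ℓ¹(Γ)`, with `μ = ∑ μ(e_γ) δ_γ`, so an element `f` of the bidual is
determined by its bounded coordinates `f(δ_γ)`. If `f` lies within `r` of `ι(X)`, soft-thresholding
these coordinates at level `r` gives an element `T_r f` of `c₀(Γ)` with `‖f - ι(T_r f)‖ ≤ r`.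
On a norm-bounded set, `μ(T_r f) = ∑ μ(e_γ) · T_r f(γ)` is a uniformly convergent series of
weak*-continuous functions of `f`, so `T_r` maps weak*-compact sets to weakly compact ones. Applied
to `cl_{w*}(ι(A))` with `r = wk(A)` this gives `ω(A) ≤ wk(A)`, and applied to `K` it gives the
second claim. The reverse inequality `wk(A) ≤ ω(A)` holds in every normed space: if `A` lies
within `t` of a weakly compact `L`, then `cl_{w*}(ι(A))` lies in the weak*-compact set
`ι(L) + (t + ε) B_{X**}`.
-/

section DHat

variable {Z : Type*} [NormedAddCommGroup Z]

lemma dhat_nonneg (A B : Set Z) : 0 ≤ dhat A B :=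
  Real.iSup_nonneg fun _ => infDist_nonneg

lemma dhat_le {A B : Set Z} {r : ℝ} (hA : A.Nonempty) (h : ∀ a ∈ A, infDist a B ≤ r) :
    dhat A B ≤ r :=
  have := hA.to_subtype
  ciSup_le fun a => h a a.2

lemma infDist_le_dhat {A B : Set Z} {a : Z} (hA : Bornology.IsBounded A) (hB : B.Nonempty)
    (ha : a ∈ A) : infDist a B ≤ dhat A B := by
  obtain ⟨b, hb⟩ := hB
  obtain ⟨C, hC⟩ := hA.subset_closedBall b
  refine le_ciSup (f := fun a' : A => infDist (a' : Z) B) ⟨C, ?_⟩ ⟨a, ha⟩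
  rintro _ ⟨a', rfl⟩
  exact (infDist_le_dist_of_mem hb).trans (hC a'.2)

end DHat

section WeakStar

variable {E : Type*} [NormedAddCommGroup E] [NormedSpace ℝ E]

lemma isBounded_of_isCompact_toWeakDual [CompleteSpace E] {K : Set (StrongDual ℝ E)}
    (hK : IsCompact (StrongDual.toWeakDual '' K)) : Bornology.IsBounded K := by
  have := (WeakDual.isBounded_iff_isVonNBounded (𝕜 := ℝ)).2 (hK.isVonNBounded ℝ)
  rwa [← WeakDual.isBounded_toWeakDual_preimage_iff_isBounded,
    StrongDual.toWeakDual.injective.preimage_image] at this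

lemma isCompact_toWeakDual_wstarClosure {A : Set (StrongDual ℝ E)}
    (hA : Bornology.IsBounded A) : IsCompact (StrongDual.toWeakDual '' wstarClosure A) := by
  rw [wstarClosure, StrongDual.toWeakDual.surjective.image_preimage]
  have hA' : Bornology.IsBounded (StrongDual.toWeakDual '' A) := by
    rwa [← WeakDual.isBounded_toWeakDual_preimage_iff_isBounded,
      StrongDual.toWeakDual.injective.preimage_image]
  exact WeakDual.isCompact_of_bounded_of_closed (WeakDual.isBounded_closure hA') isClosed_closure

lemma subset_wstarClosure (A : Set (StrongDual ℝ E)) : A ⊆ wstarClosure A :=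
  fun _ ha => (subset_closure : StrongDual.toWeakDual '' A ⊆ _) (mem_image_of_mem _ ha)

lemma norm_inclusionInDoubleDual (x : E) : ‖inclusionInDoubleDual ℝ E x‖ = ‖x‖ :=
  (inclusionInDoubleDualLi ℝ).norm_map x

lemma IsWeaklyCompact.isCompact_toWeakDual_image {K : Set E} (hK : IsWeaklyCompact K) :
    IsCompact (StrongDual.toWeakDual '' (inclusionInDoubleDual ℝ E '' K)) := by
  convert hK.image (inclusionInDoubleDualWeak ℝ E).continuous using 1
  simp only [image_image]
  rfl

end WeakStar

section WkMeasure

open scoped Pointwise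

variable {Z : Type*} [NormedAddCommGroup Z] [NormedSpace ℝ Z]

local notation "ι" => inclusionInDoubleDual ℝ Z

lemma wkMeasure_le_dhat {A K : Set Z} (hA : A.Nonempty) (hAb : Bornology.IsBounded A)
    (hK : K.Nonempty) (hKw : IsWeaklyCompact K) : wkMeasure A ≤ dhat A K := by
  refine le_of_forall_pos_le_add fun ε hε => ?_
  set t := dhat A K
  set S := ι '' K + closedBall (0 : StrongDual ℝ (StrongDual ℝ Z)) (t + ε)
  have hS : IsClosed (StrongDual.toWeakDual '' S) := by
    rw [image_add, LinearEquiv.image_eq_preimage_symm _ (closedBall _ _)]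
    exact (hKw.isCompact_toWeakDual_image.add (WeakDual.isCompact_closedBall 0 (t + ε))).isClosed
  have hAS : StrongDual.toWeakDual '' (ι '' A) ⊆ StrongDual.toWeakDual '' S := by
    refine image_mono ?_
    rintro _ ⟨a, ha, rfl⟩
    obtain ⟨k, hk, hak⟩ := (infDist_lt_iff hK).1
      ((infDist_le_dhat hAb hK ha).trans_lt (lt_add_of_pos_right t hε))
    refine ⟨ι k, mem_image_of_mem _ hk, ι (a - k), ?_, by simp⟩
    rw [mem_closedBall_zero_iff, norm_inclusionInDoubleDual, ← dist_eq_norm]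
    exact hak.le
  refine dhat_le ((hA.image _).mono (subset_wstarClosure _)) fun f hf => ?_
  obtain ⟨_, ⟨k, -, rfl⟩, g, hg, rfl⟩ : f ∈ S :=
    StrongDual.toWeakDual.injective.mem_set_image.1 (closure_minimal hAS hS hf)
  calc infDist (ι k + g) (range ι) ≤ dist (ι k + g) (ι k) := infDist_le_dist_of_mem ⟨k, rfl⟩
    _ ≤ t + ε := by simpa using hg

lemma deBlasiOmega_le_dhat {A L : Set Z} (hL : L.Nonempty) (hLw : IsWeaklyCompact L) :
    deBlasiOmega A ≤ dhat A L := by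
  have hbdd : BddBelow (range fun L' : {L' : Set Z // L'.Nonempty ∧ IsWeaklyCompact L'} =>
      dhat A L'.1) := ⟨0, forall_mem_range.2 fun _ => dhat_nonneg _ _⟩
  exact ciInf_le hbdd ⟨L, hL, hLw⟩

lemma wkMeasure_le_deBlasiOmega {A : Set Z} (hA : A.Nonempty) (hAb : Bornology.IsBounded A) :
    wkMeasure A ≤ deBlasiOmega A := by
  have : Nonempty {K : Set Z // K.Nonempty ∧ IsWeaklyCompact K} :=
    ⟨⟨{0}, singleton_nonempty 0, by simp [IsWeaklyCompact]⟩⟩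
  exact le_ciInf fun K => wkMeasure_le_dhat hA hAb K.2.1 K.2.2

end WkMeasure

section SoftThreshold

/-- Soft thresholding at level `r`: shrink `t` towards `0` by `r`, and to `0` on `[-r, r]`. -/
def softThreshold (r t : ℝ) : ℝ := t - max (min t r) (-r)

lemma continuous_softThreshold (r : ℝ) : Continuous (softThreshold r) := by
  unfold softThreshold; fun_prop

lemma abs_sub_softThreshold_le {r : ℝ} (hr : 0 ≤ r) (t : ℝ) : |t - softThreshold r t| ≤ r := by
  unfold softThreshold
  rw [sub_sub_cancel, abs_le]
  exact ⟨le_max_right _ _, max_le (min_le_right _ _) (by linarith)⟩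

lemma abs_softThreshold_le_abs {r : ℝ} (hr : 0 ≤ r) (t : ℝ) : |softThreshold r t| ≤ |t| := by
  unfold softThreshold
  grind

lemma abs_softThreshold_lt {r t ε : ℝ} (hε : 0 < ε) (h : |t| < r + ε) :
    |softThreshold r t| < ε := by
  unfold softThreshold
  grind

end SoftThreshold

namespace ZeroAtInftyContinuousMap

open ZeroAtInfty

section Eval

variable {α : Type*} [TopologicalSpace α]

def evalCLM (a : α) : C₀(α, ℝ) →L[ℝ] ℝ :=
  LinearMap.mkContinuous ⟨⟨fun x => x a, fun _ _ => rfl⟩, fun _ _ => rfl⟩ 1 fun x => by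
    simpa [← norm_toBCF_eq_norm] using x.toBCF.norm_coe_le_norm a

@[simp] lemma evalCLM_apply (a : α) (x : C₀(α, ℝ)) : evalCLM a x = x a := rfl

lemma norm_evalCLM_le (a : α) : ‖evalCLM (α := α) a‖ ≤ 1 :=
  LinearMap.mkContinuous_norm_le _ zero_le_one _

lemma abs_apply_evalCLM_le (f : StrongDual ℝ (StrongDual ℝ C₀(α, ℝ))) (a : α) :
    |f (evalCLM a)| ≤ ‖f‖ :=
  (f.le_opNorm _).trans (mul_le_of_le_one_right (norm_nonneg f) (norm_evalCLM_le a))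

lemma norm_le_iff_forall_abs_le {x : C₀(α, ℝ)} {c : ℝ} (hc : 0 ≤ c) :
    ‖x‖ ≤ c ↔ ∀ a, |x a| ≤ c := by
  simpa [← norm_toBCF_eq_norm] using BoundedContinuousFunction.norm_le (f := x.toBCF) hc

lemma tendsto_softThreshold_of_infDist_le {f : StrongDual ℝ (StrongDual ℝ C₀(α, ℝ))} {r : ℝ}
    (hf : infDist f (range (inclusionInDoubleDual ℝ C₀(α, ℝ))) ≤ r) :
    Tendsto (fun a => softThreshold r (f (evalCLM a))) (cocompact α) (𝓝 0) := by
  refine Metric.tendsto_nhds.2 fun ε hε => ?_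
  obtain ⟨_, ⟨x, rfl⟩, hfx⟩ := (infDist_lt_iff (range_nonempty _)).1
    (hf.trans_lt (lt_add_of_pos_right r (half_pos hε)))
  filter_upwards [Metric.tendsto_nhds.1 (zero_at_infty x) (ε / 2) (half_pos hε)] with a ha
  rw [Real.dist_eq, sub_zero] at ha ⊢
  have hfxa : |f (evalCLM a) - x a| < r + ε / 2 := by
    rw [dist_eq_norm] at hfx
    simpa using (abs_apply_evalCLM_le (f - inclusionInDoubleDual ℝ C₀(α, ℝ) x) a).trans_lt hfx
  refine abs_softThreshold_lt hε ?_
  linarith [abs_sub_abs_le_abs_sub (f (evalCLM a)) (x a)]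

end Eval

section Discrete

variable {Γ : Type*} [TopologicalSpace Γ] [DiscreteTopology Γ]

def single (γ : Γ) : C₀(Γ, ℝ) :=
  ⟨⟨({γ} : Set Γ).indicator 1, continuous_of_discreteTopology⟩, by
    rw [cocompact_eq_cofinite]
    exact tendsto_const_nhds.congr' <| eventually_of_mem (finite_singleton γ).compl_mem_cofinite
      fun _ h => (indicator_of_notMem h _).symm⟩

lemma sum_smul_single_apply (F : Finset Γ) (c : Γ → ℝ) (γ' : Γ) :
    (∑ γ ∈ F, c γ • single γ) γ' = (F : Set Γ).indicator c γ' := by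
  classical
  change evalCLM γ' _ = _
  simp [map_sum, single, Set.indicator_apply, Pi.single_apply]

lemma hasSum_single (x : C₀(Γ, ℝ)) : HasSum (fun γ => x γ • single γ) x := by
  classical
  rw [HasSum, SummationFilter.unconditional_filter, Metric.tendsto_atTop]
  intro ε hε
  have hsmall := Metric.tendsto_nhds.1 (zero_at_infty x) (ε / 2) (half_pos hε)
  rw [cocompact_eq_cofinite, eventually_cofinite] at hsmall
  refine ⟨hsmall.toFinset, fun F hF => ?_⟩
  refine lt_of_le_of_lt ?_ (half_lt_self hε)
  rw [dist_eq_norm, norm_le_iff_forall_abs_le (half_pos hε).le]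
  intro γ
  simp only [coe_sub, Pi.sub_apply, sum_smul_single_apply]
  by_cases hγ : γ ∈ F
  · simp [hγ, (half_pos hε).le]
  · have : γ ∉ hsmall.toFinset := fun h => hγ (hF h)
    simp only [Finite.mem_toFinset, mem_ofPred_eq, not_not, Real.dist_eq, sub_zero] at this
    simpa [hγ] using this.le

lemma sum_abs_apply_single_le (μ : StrongDual ℝ C₀(Γ, ℝ)) (F : Finset Γ) :
    ∑ γ ∈ F, |μ (single γ)| ≤ ‖μ‖ := by
  set x := ∑ γ ∈ F, (SignType.sign (μ (single γ)) : ℝ) • single γ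
  have hx : ‖x‖ ≤ 1 := by
    refine (norm_le_iff_forall_abs_le zero_le_one).2 fun γ => ?_
    rw [sum_smul_single_apply]
    by_cases hγ : γ ∈ F
    · rw [indicator_of_mem (Finset.mem_coe.2 hγ)]
      cases SignType.sign (μ (single γ)) <;> simp
    · simp [hγ]
  calc ∑ γ ∈ F, |μ (single γ)| = μ x := by simp [x, map_sum, sign_mul_self]
    _ ≤ ‖μ‖ * ‖x‖ := (le_abs_self _).trans (μ.le_opNorm x)
    _ ≤ ‖μ‖ := mul_le_of_le_one_right (norm_nonneg μ) hx

lemma summable_abs_apply_single (μ : StrongDual ℝ C₀(Γ, ℝ)) :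
    Summable fun γ => |μ (single γ)| :=
  summable_of_sum_le (fun _ => abs_nonneg _) (sum_abs_apply_single_le μ)

lemma tsum_abs_apply_single_le (μ : StrongDual ℝ C₀(Γ, ℝ)) : ∑' γ, |μ (single γ)| ≤ ‖μ‖ :=
  (summable_abs_apply_single μ).tsum_le_of_sum_le (sum_abs_apply_single_le μ)

lemma hasSum_apply_single_mul (μ : StrongDual ℝ C₀(Γ, ℝ)) (x : C₀(Γ, ℝ)) :
    HasSum (fun γ => μ (single γ) * x γ) (μ x) := by
  simpa [mul_comm] using (hasSum_single x).mapL μ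

lemma hasSum_apply_single_smul_evalCLM (μ : StrongDual ℝ C₀(Γ, ℝ)) :
    HasSum (fun γ => μ (single γ) • evalCLM γ) μ := by
  have hs : Summable fun γ => μ (single γ) • evalCLM (α := Γ) γ :=
    (summable_abs_apply_single μ).of_norm_bounded fun γ => by
      simpa [norm_smul] using mul_le_of_le_one_right (abs_nonneg _) (norm_evalCLM_le γ)
  convert hs.hasSum using 1
  ext x
  exact ((hasSum_apply_single_mul μ x).unique (by
    simpa using hs.hasSum.mapL (ContinuousLinearMap.apply ℝ ℝ x)))

lemma norm_le_of_forall_abs_apply_evalCLM_le {g : StrongDual ℝ (StrongDual ℝ C₀(Γ, ℝ))} {r : ℝ}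
    (hr : 0 ≤ r) (h : ∀ γ, |g (evalCLM γ)| ≤ r) : ‖g‖ ≤ r := by
  refine g.opNorm_le_bound hr fun μ => ?_
  have hgμ : HasSum (fun γ => μ (single γ) * g (evalCLM γ)) (g μ) := by
    simpa using (hasSum_apply_single_smul_evalCLM μ).mapL g
  calc ‖g μ‖ ≤ (∑' γ, |μ (single γ)|) * r :=
        hgμ.norm_le_of_bounded ((summable_abs_apply_single μ).hasSum.mul_right r) fun γ => by
          rw [norm_mul, Real.norm_eq_abs, Real.norm_eq_abs]
          exact mul_le_mul_of_nonneg_left (h γ) (abs_nonneg _)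
    _ ≤ r * ‖μ‖ := by rw [mul_comm]; exact mul_le_mul_of_nonneg_left (tsum_abs_apply_single_le μ) hr

local notation "ι" => inclusionInDoubleDual ℝ C₀(Γ, ℝ)

open Classical in
/-- Coordinatewise soft thresholding of an element of the bidual `ℓ^∞(Γ)`; it is `0` (a junk
value) unless the result vanishes at infinity. -/
def truncate (r : ℝ) (f : StrongDual ℝ (StrongDual ℝ C₀(Γ, ℝ))) : C₀(Γ, ℝ) :=
  if h : Tendsto (fun γ => softThreshold r (f (evalCLM γ))) (cocompact Γ) (𝓝 0) then
    ⟨⟨fun γ => softThreshold r (f (evalCLM γ)), continuous_of_discreteTopology⟩, h⟩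
  else 0

lemma truncate_apply {r : ℝ} {f : StrongDual ℝ (StrongDual ℝ C₀(Γ, ℝ))}
    (h : Tendsto (fun γ => softThreshold r (f (evalCLM γ))) (cocompact Γ) (𝓝 0)) (γ : Γ) :
    truncate r f γ = softThreshold r (f (evalCLM γ)) := by
  rw [truncate, dif_pos h]
  rfl

lemma norm_sub_truncate_le {r : ℝ} (hr : 0 ≤ r) {f : StrongDual ℝ (StrongDual ℝ C₀(Γ, ℝ))}
    (h : Tendsto (fun γ => softThreshold r (f (evalCLM γ))) (cocompact Γ) (𝓝 0)) :
    ‖f - ι (truncate r f)‖ ≤ r :=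
  norm_le_of_forall_abs_apply_evalCLM_le hr fun γ => by
    simpa [truncate_apply h] using abs_sub_softThreshold_le hr (f (evalCLM γ))

lemma isWeaklyCompact_truncate_image {r : ℝ} (hr : 0 ≤ r)
    {K : Set (StrongDual ℝ (StrongDual ℝ C₀(Γ, ℝ)))}
    (hK : IsCompact (StrongDual.toWeakDual '' K))
    (hKr : ∀ f ∈ K, Tendsto (fun γ => softThreshold r (f (evalCLM γ))) (cocompact Γ) (𝓝 0)) :
    IsWeaklyCompact (truncate r '' K) := by
  obtain ⟨C, hC⟩ := (isBounded_of_isCompact_toWeakDual hK).exists_norm_le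
  set T : WeakDual ℝ (StrongDual ℝ C₀(Γ, ℝ)) → WeakSpace ℝ C₀(Γ, ℝ) :=
    fun g => toWeakSpace ℝ _ (truncate r (WeakDual.toStrongDual g))
  have hT : ContinuousOn T (StrongDual.toWeakDual '' K) := by
    rw [continuousOn_iff_continuous_domRestrict]
    refine WeakBilin.continuous_of_continuous_eval _ fun μ => ?_
    have hmem : ∀ g : StrongDual.toWeakDual '' K, WeakDual.toStrongDual g.1 ∈ K :=
      fun g => StrongDual.toWeakDual.injective.mem_set_image.1 g.2
    have hμT : (fun g : StrongDual.toWeakDual '' K => μ (truncate r (WeakDual.toStrongDual g.1))) =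
        fun g => ∑' γ, μ (single γ) * softThreshold r (g.1 (evalCLM γ)) := by
      funext g
      rw [← (hasSum_apply_single_mul μ _).tsum_eq]
      simp only [truncate_apply (hKr _ (hmem g))]
      rfl
    refine hμT ▸ continuous_tsum (fun γ => continuous_const.mul ((continuous_softThreshold r).comp
      ((WeakDual.eval_continuous _).comp continuous_subtype_val)))
      ((summable_abs_apply_single μ).mul_right C) fun γ g => ?_
    rw [norm_mul, Real.norm_eq_abs, Real.norm_eq_abs]
    refine mul_le_mul_of_nonneg_left ?_ (abs_nonneg _)
    exact (abs_softThreshold_le_abs hr _).trans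
      ((abs_apply_evalCLM_le _ γ).trans (hC _ (hmem g)))
  unfold IsWeaklyCompact
  convert hK.image_of_continuousOn hT using 1
  simp only [image_image]
  rfl

theorem exists_isWeaklyCompact_forall_norm_sub_le {r : ℝ} (hr : 0 ≤ r)
    {K : Set (StrongDual ℝ (StrongDual ℝ C₀(Γ, ℝ)))} (hKne : K.Nonempty)
    (hK : IsCompact (StrongDual.toWeakDual '' K)) (hKr : ∀ f ∈ K, infDist f (range ι) ≤ r) :
    ∃ L : Set C₀(Γ, ℝ), L.Nonempty ∧ IsWeaklyCompact L ∧ ∀ f ∈ K, ∃ y ∈ L, ‖f - ι y‖ ≤ r :=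
  have htd := fun f hf => tendsto_softThreshold_of_infDist_le (hKr f hf)
  ⟨truncate r '' K, hKne.image _, isWeaklyCompact_truncate_image hr hK htd,
    fun f hf => ⟨_, mem_image_of_mem _ hf, norm_sub_truncate_le hr (htd f hf)⟩⟩

theorem deBlasiOmega_le_wkMeasure {A : Set C₀(Γ, ℝ)} (hA : A.Nonempty)
    (hAb : Bornology.IsBounded A) : deBlasiOmega A ≤ wkMeasure A := by
  have hK : IsCompact (StrongDual.toWeakDual '' wstarClosure (ι '' A)) :=
    isCompact_toWeakDual_wstarClosure ((inclusionInDoubleDual ℝ _).lipschitz.isBounded_image hAb)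
  obtain ⟨L, hLne, hL, hKL⟩ := exists_isWeaklyCompact_forall_norm_sub_le (dhat_nonneg _ _)
    ((hA.image _).mono (subset_wstarClosure _)) hK
    fun f hf => infDist_le_dhat (isBounded_of_isCompact_toWeakDual hK) (range_nonempty _) hf
  refine (deBlasiOmega_le_dhat hLne hL).trans (dhat_le hA fun a ha => ?_)
  obtain ⟨y, hy, hay⟩ := hKL (ι a) (subset_wstarClosure _ (mem_image_of_mem _ ha))
  calc infDist a L ≤ dist a y := infDist_le_dist_of_mem hy
    _ = ‖ι a - ι y‖ := by rw [dist_eq_norm, ← map_sub, norm_inclusionInDoubleDual]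
    _ ≤ wkMeasure A := hay

theorem exists_isWeaklyCompact_dhat_image_eq {K : Set (StrongDual ℝ (StrongDual ℝ C₀(Γ, ℝ)))}
    (hKne : K.Nonempty) (hK : IsCompact (StrongDual.toWeakDual '' K)) :
    ∃ L : Set C₀(Γ, ℝ), L.Nonempty ∧ IsWeaklyCompact L ∧ dhat K (ι '' L) = dhat K (range ι) := by
  have hKb := isBounded_of_isCompact_toWeakDual hK
  obtain ⟨L, hLne, hL, hKL⟩ := exists_isWeaklyCompact_forall_norm_sub_le (dhat_nonneg _ _) hKne hK
    fun f hf => infDist_le_dhat hKb (range_nonempty _) hf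
  refine ⟨L, hLne, hL, le_antisymm (dhat_le hKne fun f hf => ?_) (dhat_le hKne fun f hf => ?_)⟩
  · obtain ⟨y, hy, hfy⟩ := hKL f hf
    exact (infDist_le_dist_of_mem (mem_image_of_mem _ hy)).trans ((dist_eq_norm _ _).trans_le hfy)
  · exact (infDist_le_infDist_of_subset (image_subset_range _ _) (hLne.image _)).trans
      (infDist_le_dhat hKb (hLne.image _) hf)

end Discrete

end ZeroAtInftyContinuousMap

open ZeroAtInfty in
/-- For `X = c₀(Γ)` (Γ a discrete space), `wk_X(A) = ω(A)` for every nonempty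
bounded `A ⊆ X`; moreover, for every nonempty weak* compact `K ⊆ X**` there is a nonempty
weakly compact `L ⊆ X` with `d̂(K, ι(L)) = d̂(K, ι(X))`. -/
theorem statement2 (Γ : Type*) [TopologicalSpace Γ] [DiscreteTopology Γ] :
    (∀ A : Set C₀(Γ, ℝ), A.Nonempty → Bornology.IsBounded A →
      wkMeasure A = deBlasiOmega A) ∧
    (∀ K : Set (StrongDual ℝ (StrongDual ℝ C₀(Γ, ℝ))), K.Nonempty →
      IsCompact (StrongDual.toWeakDual '' K) →
      ∃ L : Set C₀(Γ, ℝ), L.Nonempty ∧ IsWeaklyCompact L ∧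
        dhat K (inclusionInDoubleDual ℝ C₀(Γ, ℝ) '' L) =
          dhat K (Set.range (inclusionInDoubleDual ℝ C₀(Γ, ℝ)))) :=
  ⟨fun _ hA hAb => le_antisymm (wkMeasure_le_deBlasiOmega hA hAb)
      (ZeroAtInftyContinuousMap.deBlasiOmega_le_wkMeasure hA hAb),
    fun _ hKne hK => ZeroAtInftyContinuousMap.exists_isWeaklyCompact_dhat_image_eq hKne hK⟩

end
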